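/- arXiv:2311.03070 — 2 statements merged into one kernel-verified Lean document; each statement's English description precedes it below -/
import Mathlib

section
/- Let C^d(r,h) be the spherical cap of height h of the Euclidean ball of radius r in ℝ^d, i.e. C^d(r,h) = {(y,z) ∈ ℝ^{d-1} × ℝ : ‖y‖² + z² ≤ r², r - h ≤ z ≤ r}. Then for all 0 < h < 2r/d, the Lebesgue volume satisfies (a_d/2) · r^{(d-1)/2} · h^{(d+1)/2} < Vol_d(C^d(r,h)) < a_d · r^{(d-1)/2} · h^{(d+1)/2}, where a_d = (2π)^{(d-1)/2} / Γ((d+1)/2 + 1). -/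
/-!
Slicing perpendicular to the axis of the cap, its volume is `κₙ ∫_{r-h}^r (r² - z²)^{n/2} dz`,
where `n = d - 1` and `κₙ` is the volume of the unit `n`-ball. On `[r - h, r]` the factor
`r² - z² = (r - z)(r + z)` lies between `(2r - h)(r - z)` and `2r (r - z)`, so the integral lies
strictly between `(2r - h)^{n/2}` and `(2r)^{n/2}` times `∫₀^h t^{n/2} dt`; the upper value gives
exactly `a_d r^{n/2} h^{n/2+1}`. For the lower one, `h < 2r/(n+1)` gives
`(2r - h)/(2r) ≥ n/(n+1)`, and `(n/(n+1))^{n/2} ≥ e^{-1/2} > 1/2`.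
-/

open MeasureTheory Real Set

theorem sqrt_pow_eq_rpow {x : ℝ} (hx : 0 ≤ x) (n : ℕ) : √x ^ n = x ^ ((n : ℝ) / 2) := by
  rw [rpow_div_two_eq_sqrt _ hx, rpow_natCast]

noncomputable def unitBallVolume (n : ℕ) : ℝ := √π ^ n / Gamma (n / 2 + 1)

theorem unitBallVolume_pos (n : ℕ) : 0 < unitBallVolume n :=
  div_pos (pow_pos (sqrt_pos.2 pi_pos) n) (Gamma_pos_of_pos (by positivity))

theorem unitBallVolume_mul_two_mul_rpow (n : ℕ) {r : ℝ} (hr : 0 ≤ r) (h : ℝ) :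
    unitBallVolume n * ((2 * r) ^ ((n : ℝ) / 2) * (h ^ ((n : ℝ) / 2 + 1) / ((n : ℝ) / 2 + 1))) =
      (2 * π) ^ ((n : ℝ) / 2) / Gamma ((n : ℝ) / 2 + 1 + 1) * r ^ ((n : ℝ) / 2)
        * h ^ ((n : ℝ) / 2 + 1) := by
  have hα : (n : ℝ) / 2 + 1 ≠ 0 := by positivity
  have hΓ : Gamma ((n : ℝ) / 2 + 1) ≠ 0 := (Gamma_pos_of_pos (by positivity)).ne'
  rw [unitBallVolume, sqrt_pow_eq_rpow pi_pos.le, mul_rpow zero_le_two pi_pos.le,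
    mul_rpow zero_le_two hr, Gamma_add_one hα]
  field_simp

namespace EuclideanSpace

variable {ι : Type*} [Fintype ι] [Nonempty ι]

theorem volume_setOf_norm_sq_le (c : ℝ) :
    volume {y : EuclideanSpace ℝ ι | ‖y‖ ^ 2 ≤ c} =
      ENNReal.ofReal (unitBallVolume (Fintype.card ι) * √c ^ Fintype.card ι) := by
  rcases lt_or_ge c 0 with hc | hc
  · have hempty : {y : EuclideanSpace ℝ ι | ‖y‖ ^ 2 ≤ c} = ∅ :=
      eq_empty_of_forall_notMem fun y hy => (hc.trans_le (sq_nonneg _)).not_ge hy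
    rw [hempty, measure_empty, sqrt_eq_zero_of_nonpos hc.le, zero_pow Fintype.card_ne_zero,
      mul_zero, ENNReal.ofReal_zero]
  · have hball : {y : EuclideanSpace ℝ ι | ‖y‖ ^ 2 ≤ c} = Metric.closedBall 0 √c := by
      ext y
      simp [Real.le_sqrt (norm_nonneg y) hc]
    rw [hball, volume_closedBall, ENNReal.ofReal_mul (unitBallVolume_pos _).le,
      ENNReal.ofReal_pow (sqrt_nonneg _), mul_comm]
    rfl

theorem toReal_volume_solidOfRevolution {f : ℝ → ℝ} (hf : Continuous f) {a b : ℝ}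
    (hab : a ≤ b) :
    (volume {p : EuclideanSpace ℝ ι × ℝ | ‖p.1‖ ^ 2 ≤ f p.2 ∧ a ≤ p.2 ∧ p.2 ≤ b}).toReal =
      ∫ z in a..b, unitBallVolume (Fintype.card ι) * √(f z) ^ Fintype.card ι := by
  set S := {p : EuclideanSpace ℝ ι × ℝ | ‖p.1‖ ^ 2 ≤ f p.2 ∧ a ≤ p.2 ∧ p.2 ≤ b}
  have hS : MeasurableSet S := by
    simp only [S, ofPred_and]
    exact (measurableSet_le (by fun_prop) (by fun_prop)).inter
      ((measurableSet_le (by fun_prop) (by fun_prop)).inter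
        (measurableSet_le (by fun_prop) (by fun_prop)))
  have hslice : ∀ z, volume ((fun y => (y, z)) ⁻¹' S) = (Icc a b).indicator
      (fun z => ENNReal.ofReal (unitBallVolume (Fintype.card ι) * √(f z) ^ Fintype.card ι)) z := by
    intro z
    by_cases hz : z ∈ Icc a b
    · rw [indicator_of_mem hz, ← volume_setOf_norm_sq_le]
      congr 1
      ext y
      simp [S, hz.1, hz.2]
    · have hempty : (fun y => (y, z)) ⁻¹' S = ∅ :=
        eq_empty_of_forall_notMem fun y hy => hz ⟨hy.2.1, hy.2.2⟩
      rw [indicator_of_notMem hz, hempty, measure_empty]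
  have hcont : Continuous fun z => unitBallVolume (Fintype.card ι) * √(f z) ^ Fintype.card ι := by
    fun_prop
  have hnonneg : 0 ≤ᵐ[volume.restrict (Icc a b)]
      fun z => unitBallVolume (Fintype.card ι) * √(f z) ^ Fintype.card ι :=
    .of_forall fun z => mul_nonneg (unitBallVolume_pos _).le (by positivity)
  rw [Measure.volume_eq_prod, Measure.prod_apply_symm hS]
  simp_rw [hslice]
  rw [lintegral_indicator measurableSet_Icc, ← ofReal_integral_eq_lintegral_ofReal
    hcont.integrableOn_Icc hnonneg, ENNReal.toReal_ofReal (integral_nonneg_of_ae hnonneg),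
    integral_Icc_eq_integral_Ioc, ← intervalIntegral.integral_of_le hab]

theorem toReal_volume_setOf_norm_sq_add_sq_le (r : ℝ) {a b : ℝ} (hab : a ≤ b) :
    (volume {p : EuclideanSpace ℝ ι × ℝ | ‖p.1‖ ^ 2 + p.2 ^ 2 ≤ r ^ 2 ∧ a ≤ p.2 ∧ p.2 ≤ b}).toReal =
      unitBallVolume (Fintype.card ι) * ∫ z in a..b, √(r ^ 2 - z ^ 2) ^ Fintype.card ι := by
  simp_rw [← le_sub_iff_add_le, ← intervalIntegral.integral_const_mul]
  exact toReal_volume_solidOfRevolution (f := fun z => r ^ 2 - z ^ 2) (by fun_prop) hab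

end EuclideanSpace

theorem integral_sqrt_mul_sub_pow (n : ℕ) {c : ℝ} (hc : 0 ≤ c) (r : ℝ) {h : ℝ} (hh : 0 ≤ h) :
    ∫ z in (r - h)..r, √(c * (r - z)) ^ n
      = c ^ ((n : ℝ) / 2) * (h ^ ((n : ℝ) / 2 + 1) / ((n : ℝ) / 2 + 1)) := by
  simp_rw [sqrt_mul hc, mul_pow, intervalIntegral.integral_const_mul, sqrt_pow_eq_rpow hc]
  congr 1
  have hrpow : EqOn (fun t => √t ^ n) (fun t => t ^ ((n : ℝ) / 2)) (uIcc 0 h) := fun t ht =>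
    sqrt_pow_eq_rpow (uIcc_of_le hh ▸ ht).1 n
  rw [intervalIntegral.integral_comp_sub_left (fun t => √t ^ n), sub_self, sub_sub_cancel,
    intervalIntegral.integral_congr hrpow,
    integral_rpow (.inl (by linarith [(by positivity : (0 : ℝ) ≤ n / 2)])),
    zero_rpow (by positivity), sub_zero]

theorem integral_sqrt_pow_lt_integral_sqrt_pow {f g : ℝ → ℝ} {a b : ℝ} {n : ℕ} (hn : n ≠ 0)
    (hab : a < b) (hf : Continuous f) (hg : Continuous g) (hle : ∀ z ∈ Icc a b, f z ≤ g z)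
    (hlt : ∃ z ∈ Icc a b, 0 ≤ f z ∧ f z < g z) :
    ∫ z in a..b, √(f z) ^ n < ∫ z in a..b, √(g z) ^ n := by
  obtain ⟨z, hz, hfz, hfgz⟩ := hlt
  refine intervalIntegral.integral_lt_integral_of_continuousOn_of_le_of_exists_lt hab
    (by fun_prop) (by fun_prop) (fun x hx => ?_)
    ⟨z, hz, pow_lt_pow_left₀ (sqrt_lt_sqrt hfz hfgz) (sqrt_nonneg _) hn⟩
  exact pow_le_pow_left₀ (sqrt_nonneg _) (sqrt_le_sqrt (hle x (Ioc_subset_Icc_self hx))) n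

theorem integral_sqrt_sq_sub_sq_pow_lt {n : ℕ} (hn : n ≠ 0) {r h : ℝ} (h0 : 0 < h)
    (h2r : h ≤ 2 * r) :
    ∫ z in (r - h)..r, √(r ^ 2 - z ^ 2) ^ n
      < (2 * r) ^ ((n : ℝ) / 2) * (h ^ ((n : ℝ) / 2 + 1) / ((n : ℝ) / 2 + 1)) := by
  rw [← integral_sqrt_mul_sub_pow n (by linarith) r h0.le]
  refine integral_sqrt_pow_lt_integral_sqrt_pow hn (by linarith) (by fun_prop) (by fun_prop)
    (fun z _ => by nlinarith [sq_nonneg (r - z)]) ⟨r - h, ⟨le_rfl, by linarith⟩, ?_, ?_⟩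
  · nlinarith
  · nlinarith

theorem lt_integral_sqrt_sq_sub_sq_pow {n : ℕ} (hn : n ≠ 0) {r h : ℝ} (h0 : 0 < h)
    (h2r : h ≤ 2 * r) :
    (2 * r - h) ^ ((n : ℝ) / 2) * (h ^ ((n : ℝ) / 2 + 1) / ((n : ℝ) / 2 + 1))
      < ∫ z in (r - h)..r, √(r ^ 2 - z ^ 2) ^ n := by
  rw [← integral_sqrt_mul_sub_pow n (by linarith) r h0.le]
  refine integral_sqrt_pow_lt_integral_sqrt_pow hn (by linarith) (by fun_prop) (by fun_prop)
    (fun z hz => by nlinarith [hz.1, hz.2]) ⟨r - h / 2, ⟨by linarith, by linarith⟩, ?_, ?_⟩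
  · nlinarith
  · nlinarith

theorem half_le_div_add_one_rpow (n : ℕ) : 1 / 2 ≤ ((n : ℝ) / (n + 1)) ^ ((n : ℝ) / 2) := by
  rcases eq_or_ne n 0 with rfl | hn
  · norm_num
  have hq : ((n : ℝ) / (n + 1)) ^ n = ((1 + (n : ℝ)⁻¹) ^ n)⁻¹ := by
    rw [← inv_pow]
    congr 1
    field_simp
  have hquarter : 1 / 4 ≤ ((n : ℝ) / (n + 1)) ^ n := by
    rw [hq, one_div]
    exact inv_anti₀ (by positivity) (one_add_inv_pow_le_exp.trans (by linarith [exp_one_lt_three]))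
  have hx : (0 : ℝ) ≤ n / (n + 1) := by positivity
  rw [← sqrt_pow_eq_rpow hx, ← pow_le_pow_iff_left₀ (by norm_num) (by positivity) two_ne_zero,
    ← pow_mul, mul_comm, pow_mul, sq_sqrt hx]
  linarith

theorem half_mul_rpow_le_sub_rpow (n : ℕ) {r h : ℝ} (hr : 0 ≤ r) (hh : h ≤ 2 * r / (n + 1)) :
    (2 * r) ^ ((n : ℝ) / 2) / 2 ≤ (2 * r - h) ^ ((n : ℝ) / 2) := by
  have hsub : 2 * r * (n / (n + 1)) ≤ 2 * r - h := by
    have : 2 * r * (n / (n + 1)) = 2 * r - 2 * r / (n + 1) := by field_simp; ring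
    linarith
  calc (2 * r) ^ ((n : ℝ) / 2) / 2 = (2 * r) ^ ((n : ℝ) / 2) * (1 / 2) := by ring
    _ ≤ (2 * r) ^ ((n : ℝ) / 2) * ((n : ℝ) / (n + 1)) ^ ((n : ℝ) / 2) := by
        gcongr
        exact half_le_div_add_one_rpow n
    _ = (2 * r * (n / (n + 1))) ^ ((n : ℝ) / 2) := (mul_rpow (by positivity) (by positivity)).symm
    _ ≤ (2 * r - h) ^ ((n : ℝ) / 2) := rpow_le_rpow (by positivity) hsub (by positivity)

/-- Volume bounds for spherical caps: for `0 < h < 2r/d`, the cap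
`C^d(r,h) = {(y,z) : ‖y‖² + z² ≤ r², r - h ≤ z ≤ r}` of the Euclidean ball of
radius `r` in `ℝ^d` satisfies
`(a_d/2) r^{(d-1)/2} h^{(d+1)/2} < Vol_d(C^d(r,h)) < a_d r^{(d-1)/2} h^{(d+1)/2}`,
where `a_d = (2π)^{(d-1)/2} / Γ((d+1)/2 + 1)`. -/
theorem volume_ball_cap_bounds (d : ℕ) (hd : 2 ≤ d) (r h : ℝ)
    (h0 : 0 < h) (hh : h < 2 * r / d) :
    (2 * Real.pi) ^ (((d : ℝ) - 1) / 2) / Real.Gamma (((d : ℝ) + 1) / 2 + 1) / 2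
        * r ^ (((d : ℝ) - 1) / 2) * h ^ (((d : ℝ) + 1) / 2)
      < (volume {p : EuclideanSpace ℝ (Fin (d - 1)) × ℝ |
          ‖p.1‖ ^ 2 + p.2 ^ 2 ≤ r ^ 2 ∧ r - h ≤ p.2 ∧ p.2 ≤ r}).toReal ∧
    (volume {p : EuclideanSpace ℝ (Fin (d - 1)) × ℝ |
          ‖p.1‖ ^ 2 + p.2 ^ 2 ≤ r ^ 2 ∧ r - h ≤ p.2 ∧ p.2 ≤ r}).toReal
      < (2 * Real.pi) ^ (((d : ℝ) - 1) / 2) / Real.Gamma (((d : ℝ) + 1) / 2 + 1)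
        * r ^ (((d : ℝ) - 1) / 2) * h ^ (((d : ℝ) + 1) / 2) := by
  obtain ⟨n, rfl⟩ : ∃ n, d = n + 1 := ⟨d - 1, by omega⟩
  have hn : n ≠ 0 := by omega
  have : Nonempty (Fin n) := Fin.pos_iff_nonempty.mp (Nat.pos_of_ne_zero hn)
  push_cast at hh ⊢
  rw [Nat.add_sub_cancel, show ((n : ℝ) + 1 - 1) / 2 = n / 2 by ring,
    show ((n : ℝ) + 1 + 1) / 2 = n / 2 + 1 by ring]
  have hr : 0 < r := by
    have : 0 < 2 * r / (n + 1) := h0.trans hh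
    rw [div_pos_iff_of_pos_right (by positivity)] at this
    linarith
  have h2r : h ≤ 2 * r := hh.le.trans (div_le_self (by linarith) (by linarith))
  have hκ := unitBallVolume_pos n
  have hconst := unitBallVolume_mul_two_mul_rpow n hr.le h
  rw [EuclideanSpace.toReal_volume_setOf_norm_sq_add_sq_le r (by linarith), Fintype.card_fin]
  refine ⟨?_, hconst ▸ mul_lt_mul_of_pos_left (integral_sqrt_sq_sub_sq_pow_lt hn h0 h2r) hκ⟩
  calc _ = unitBallVolume n * ((2 * r) ^ ((n : ℝ) / 2)
          * (h ^ ((n : ℝ) / 2 + 1) / ((n : ℝ) / 2 + 1))) / 2 := by rw [hconst]; ring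
    _ = unitBallVolume n * ((2 * r) ^ ((n : ℝ) / 2) / 2
          * (h ^ ((n : ℝ) / 2 + 1) / ((n : ℝ) / 2 + 1))) := by ring
    _ ≤ unitBallVolume n * ((2 * r - h) ^ ((n : ℝ) / 2)
          * (h ^ ((n : ℝ) / 2 + 1) / ((n : ℝ) / 2 + 1))) := by
        gcongr
        exact half_mul_rpow_le_sub_rpow n hr.le hh.le
    _ < _ := mul_lt_mul_of_pos_left (lt_integral_sqrt_sq_sub_sq_pow hn h0 h2r) hκ
end

section
/- Let K ⊂ ℍ^d be a hyperbolic convex body (in the hyperboloid model in ℝ^{d,1}) and let K* = {v ∈ dS₁^d : u∘v ≤ 0 for all u ∈ K} be its hyperbolic dual. Then (K*)* = K, where for a subset L ⊂ dS₁^d we set L* = {u ∈ ℍ^d : u∘v ≤ 0 for all v ∈ L}. -/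
/-!
The inclusion `K ⊆ (K*)*` is immediate. Conversely, let `u ∈ ℍ^d \ K`. Since `rad K ∩ ℍ^d = K`,
`u` lies outside the closed convex cone `rad K`, and Farkas' lemma yields a linear functional that
is nonpositive on `rad K` and positive at `u`; write it as `w ↦ w∘v`. A vector having positive
product with one point of `ℍ^d` and nonpositive product with another cannot be causal, so
`v∘v > 0` and `v / √(v∘v)` is a point of `K*` with positive product with `u`, i.e. `u ∉ (K*)*`.
-/

open scoped BigOperators

/-- The Lorentz–Minkowski bilinear form on `ℝ^{d,1} = ℝ^{d+1}`. -/
def lorentzInner {d : ℕ} (v w : Fin (d + 1) → ℝ) : ℝ :=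
  (∑ i : Fin d, v i.castSucc * w i.castSucc) - v (Fin.last d) * w (Fin.last d)

/-- The hyperboloid model `ℍ^d = {u : u∘u = −1, u_{d+1} > 0}`. -/
def hyperboloid (d : ℕ) : Set (Fin (d + 1) → ℝ) :=
  {u | lorentzInner u u = -1 ∧ 0 < u (Fin.last d)}

/-- The de Sitter space `dS₁^d = {v : v∘v = 1}`. -/
def deSitter (d : ℕ) : Set (Fin (d + 1) → ℝ) :=
  {v | lorentzInner v v = 1}

/-- The radial extension `rad K = {ru : r ≥ 0, u ∈ K}`. -/
def radExt {d : ℕ} (K : Set (Fin (d + 1) → ℝ)) : Set (Fin (d + 1) → ℝ) :=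
  {x | ∃ r : ℝ, 0 ≤ r ∧ ∃ u ∈ K, x = r • u}

/-- A hyperbolic convex body. -/
def IsHypConvexBody {d : ℕ} (K : Set (Fin (d + 1) → ℝ)) : Prop :=
  K ⊆ hyperboloid d ∧ IsCompact K ∧ Convex ℝ (radExt K) ∧ (interior (radExt K)).Nonempty

/-- The hyperbolic dual `K* ⊂ dS₁^d` of a set `K ⊂ ℍ^d`. -/
def hypDual {d : ℕ} (K : Set (Fin (d + 1) → ℝ)) : Set (Fin (d + 1) → ℝ) :=
  {v ∈ deSitter d | ∀ u ∈ K, lorentzInner u v ≤ 0}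

/-- The dual `L* ⊂ ℍ^d` of a set `L ⊂ dS₁^d`. -/
def deSitterDual {d : ℕ} (L : Set (Fin (d + 1) → ℝ)) : Set (Fin (d + 1) → ℝ) :=
  {u ∈ hyperboloid d | ∀ v ∈ L, lorentzInner u v ≤ 0}

open scoped RealInnerProductSpace

section Lorentz

variable {d : ℕ}

def spatial (x : Fin (d + 1) → ℝ) : EuclideanSpace ℝ (Fin d) :=
  WithLp.toLp 2 fun i => x i.castSucc

lemma spatial_smul (c : ℝ) (x : Fin (d + 1) → ℝ) : spatial (c • x) = c • spatial x := rfl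

lemma lorentzInner_eq_inner_spatial (x y : Fin (d + 1) → ℝ) :
    lorentzInner x y = ⟪spatial x, spatial y⟫ - x (Fin.last d) * y (Fin.last d) := by
  simp [lorentzInner, spatial, PiLp.inner_apply, mul_comm]

lemma lorentzInner_self_eq (x : Fin (d + 1) → ℝ) :
    lorentzInner x x = ‖spatial x‖ ^ 2 - x (Fin.last d) ^ 2 := by
  rw [lorentzInner_eq_inner_spatial, real_inner_self_eq_norm_sq]
  ring

lemma lorentzInner_smul_right (c : ℝ) (v w : Fin (d + 1) → ℝ) :
    lorentzInner v (c • w) = c * lorentzInner v w := by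
  simp only [lorentzInner_eq_inner_spatial, spatial_smul, inner_smul_right, Pi.smul_apply,
    smul_eq_mul]
  ring

lemma lorentzInner_neg_right (v w : Fin (d + 1) → ℝ) :
    lorentzInner v (-w) = -lorentzInner v w := by
  rw [← neg_one_smul ℝ w, lorentzInner_smul_right, neg_one_mul]

lemma lorentzInner_smul_self (c : ℝ) (v : Fin (d + 1) → ℝ) :
    lorentzInner (c • v) (c • v) = c ^ 2 * lorentzInner v v := by
  simp only [lorentzInner_self_eq, spatial_smul, norm_smul, Real.norm_eq_abs, Pi.smul_apply,
    smul_eq_mul, mul_pow, sq_abs]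
  ring

lemma exists_lorentzInner_eq (f : Module.Dual ℝ (Fin (d + 1) → ℝ)) :
    ∃ v, ∀ w, lorentzInner w v = f w := by
  refine ⟨Fin.snoc (fun i => f (Pi.single i.castSucc 1)) (-f (Pi.single (Fin.last d) 1)),
    fun w => ?_⟩
  rw [f.pi_apply_eq_sum_univ w, Fin.sum_univ_castSucc, lorentzInner]
  simp only [eq_comm (a := Fin.castSucc _), eq_comm (a := Fin.last d), ← Pi.single_apply,
    Fin.snoc_castSucc, Fin.snoc_last, smul_eq_mul]
  ring

lemma norm_spatial_lt_of_mem_hyperboloid {u : Fin (d + 1) → ℝ} (hu : u ∈ hyperboloid d) :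
    ‖spatial u‖ < u (Fin.last d) := by
  have h := hu.1
  rw [lorentzInner_self_eq] at h
  exact lt_of_pow_lt_pow_left₀ 2 hu.2.le (by linarith)

lemma one_le_last_of_mem_hyperboloid {u : Fin (d + 1) → ℝ} (hu : u ∈ hyperboloid d) :
    1 ≤ u (Fin.last d) := by
  have h := hu.1
  rw [lorentzInner_self_eq] at h
  nlinarith [norm_nonneg (spatial u), hu.2]

lemma norm_spatial_le_of_lorentzInner_self_nonpos {v : Fin (d + 1) → ℝ}
    (hv : lorentzInner v v ≤ 0) : ‖spatial v‖ ≤ |v (Fin.last d)| := by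
  rw [lorentzInner_self_eq] at hv
  exact (sq_le_sq₀ (norm_nonneg _) (abs_nonneg _)).1 (by rw [sq_abs]; linarith)

lemma lorentzInner_nonpos_of_last_nonneg {u v : Fin (d + 1) → ℝ} (hu : u ∈ hyperboloid d)
    (hv : lorentzInner v v ≤ 0) (ht : 0 ≤ v (Fin.last d)) : lorentzInner u v ≤ 0 := by
  have hvs := norm_spatial_le_of_lorentzInner_self_nonpos hv
  rw [abs_of_nonneg ht] at hvs
  rw [lorentzInner_eq_inner_spatial, sub_nonpos]
  calc ⟪spatial u, spatial v⟫ ≤ ‖spatial u‖ * ‖spatial v‖ := real_inner_le_norm _ _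
    _ ≤ u (Fin.last d) * v (Fin.last d) :=
      mul_le_mul (norm_spatial_lt_of_mem_hyperboloid hu).le hvs (norm_nonneg _) hu.2.le

lemma lorentzInner_neg_of_last_pos {u v : Fin (d + 1) → ℝ} (hu : u ∈ hyperboloid d)
    (hv : lorentzInner v v ≤ 0) (ht : 0 < v (Fin.last d)) : lorentzInner u v < 0 := by
  have hvs := norm_spatial_le_of_lorentzInner_self_nonpos hv
  rw [abs_of_pos ht] at hvs
  rw [lorentzInner_eq_inner_spatial, sub_neg]
  calc ⟪spatial u, spatial v⟫ ≤ ‖spatial u‖ * ‖spatial v‖ := real_inner_le_norm _ _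
    _ ≤ ‖spatial u‖ * v (Fin.last d) := by gcongr
    _ < u (Fin.last d) * v (Fin.last d) := by
      gcongr
      exact norm_spatial_lt_of_mem_hyperboloid hu

/-- A causal vector lies in the future or the past cone, and accordingly its product with every
point of `ℍ^d` is nonpositive, resp. positive. -/
lemma lorentzInner_self_pos_of_sign_change {u w v : Fin (d + 1) → ℝ} (hu : u ∈ hyperboloid d)
    (hw : w ∈ hyperboloid d) (huv : 0 < lorentzInner u v) (hwv : lorentzInner w v ≤ 0) :
    0 < lorentzInner v v := by
  by_contra! hv
  rcases le_or_gt 0 (v (Fin.last d)) with ht | ht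
  · exact (lorentzInner_nonpos_of_last_nonneg hu hv ht).not_gt huv
  · have hv' : lorentzInner (-v) (-v) ≤ 0 := by
      rwa [← neg_one_smul ℝ v, lorentzInner_smul_self, neg_one_sq, one_mul]
    have := lorentzInner_neg_of_last_pos hw hv' (by simpa using ht)
    rw [lorentzInner_neg_right] at this
    linarith

lemma inv_sqrt_smul_mem_deSitter {v : Fin (d + 1) → ℝ} (hv : 0 < lorentzInner v v) :
    (√(lorentzInner v v))⁻¹ • v ∈ deSitter d := by
  change lorentzInner _ _ = 1
  rw [lorentzInner_smul_self, inv_pow, Real.sq_sqrt hv.le, inv_mul_cancel₀ hv.ne']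

end Lorentz

section RadialExtension

variable {d : ℕ} {K : Set (Fin (d + 1) → ℝ)}

lemma subset_radExt : K ⊆ radExt K :=
  fun u hu => ⟨1, zero_le_one, u, hu, (one_smul ℝ u).symm⟩

lemma smul_mem_radExt {c : ℝ} {x : Fin (d + 1) → ℝ} (hc : 0 ≤ c) (hx : x ∈ radExt K) :
    c • x ∈ radExt K := by
  obtain ⟨r, hr, u, hu, rfl⟩ := hx
  exact ⟨c * r, mul_nonneg hc hr, u, hu, smul_smul c r u⟩

lemma radExt_inter_hyperboloid (hK : K ⊆ hyperboloid d) : radExt K ∩ hyperboloid d = K := by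
  refine Set.Subset.antisymm ?_ fun u hu => ⟨subset_radExt hu, hK hu⟩
  rintro _ ⟨⟨r, hr, u, hu, rfl⟩, hru⟩
  have hr1 : r = 1 := by
    have h := hru.1
    rw [lorentzInner_smul_self, (hK hu).1] at h
    nlinarith
  simpa [hr1] using hu

/-- Near a point `x`, the cone over `K` only involves the scalars `r ≤ x_{d+1} + 1`, so locally it
is the image of the compact set `[0, x_{d+1} + 1] × K`. -/
lemma isClosed_radExt (hKc : IsCompact K) (hK : ∀ u ∈ K, 1 ≤ u (Fin.last d)) :
    IsClosed (radExt K) := by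
  refine isClosed_of_closure_subset fun x hx => ?_
  set R := x (Fin.last d) + 1
  let piece := (fun p : ℝ × (Fin (d + 1) → ℝ) => p.1 • p.2) '' (Set.Icc 0 R ×ˢ K)
  have hpiece : IsClosed piece :=
    ((isCompact_Icc.prod hKc).image (by fun_prop)).isClosed
  have hsub : radExt K ∩ {y | y (Fin.last d) < R} ⊆ piece := by
    rintro _ ⟨⟨r, hr, u, hu, rfl⟩, hlt⟩
    refine ⟨(r, u), ⟨⟨hr, ?_⟩, hu⟩, rfl⟩
    have : r * u (Fin.last d) < R := hlt
    nlinarith [hK u hu]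
  have hopen : IsOpen {y : Fin (d + 1) → ℝ | y (Fin.last d) < R} :=
    isOpen_lt (continuous_apply _) continuous_const
  obtain ⟨⟨r, u⟩, ⟨hr, hu⟩, rfl⟩ :=
    closure_minimal hsub hpiece (hopen.closure_inter ⟨hx, by simp [R]⟩)
  exact ⟨r, hr.1, u, hu, rfl⟩

def radExtProperCone (hK : K.Nonempty) (hconv : Convex ℝ (radExt K))
    (hclosed : IsClosed (radExt K)) : ProperCone ℝ (Fin (d + 1) → ℝ) where
  carrier := radExt K
  zero_mem' := by simpa using smul_mem_radExt le_rfl (subset_radExt hK.some_mem)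
  smul_mem' c _ hx := smul_mem_radExt c.2 hx
  add_mem' {x y} hx hy := by
    have hmid := hconv hx hy (by norm_num) (by norm_num) (add_halves (1 : ℝ))
    convert smul_mem_radExt (by norm_num : (0 : ℝ) ≤ 2) hmid using 1
    module
  isClosed' := hclosed

end RadialExtension

theorem hypDual_involutive_general (d : ℕ)
    (K : Set (Fin (d + 1) → ℝ)) (hK : IsHypConvexBody K) :
    deSitterDual (hypDual K) = K := by
  obtain ⟨hKH, hKc, hKconv, hKint⟩ := hK
  refine Set.Subset.antisymm (fun u hu => ?_) fun w hw => ⟨hKH hw, fun v hv => hv.2 w hw⟩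
  obtain ⟨-, -, w, hw, -⟩ := interior_subset hKint.some_mem
  by_contra huK
  have huC : u ∉ radExt K := fun h => huK (radExt_inter_hyperboloid hKH ▸ ⟨h, hu.1⟩)
  obtain ⟨f, hfC, hfu⟩ := ProperCone.hyperplane_separation_point
    (radExtProperCone ⟨w, hw⟩ hKconv
      (isClosed_radExt hKc fun u hu => one_le_last_of_mem_hyperboloid (hKH hu))) huC
  obtain ⟨v, hv⟩ := exists_lorentzInner_eq (-f).toLinearMap
  have hvK : ∀ w ∈ K, lorentzInner w v ≤ 0 := fun w hw => by
    simpa [hv] using hfC w (subset_radExt hw)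
  have huv : 0 < lorentzInner u v := by simpa [hv] using hfu
  have hvv : 0 < lorentzInner v v :=
    lorentzInner_self_pos_of_sign_change hu.1 (hKH hw) huv (hvK w hw)
  have hu_le := hu.2 _ ⟨inv_sqrt_smul_mem_deSitter hvv, fun w hw => by
    rw [lorentzInner_smul_right]
    exact mul_nonpos_of_nonneg_of_nonpos (by positivity) (hvK w hw)⟩
  rw [lorentzInner_smul_right] at hu_le
  exact hu_le.not_gt (mul_pos (by positivity) huv)

/-- Hyperbolic duality is an involution on hyperbolic convex bodies: `(K*)* = K`. -/
theorem hypDual_involutive (d : ℕ) (hd : 2 ≤ d)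
    (K : Set (Fin (d + 1) → ℝ)) (hK : IsHypConvexBody K) :
    deSitterDual (hypDual K) = K :=
  hypDual_involutive_general d K hK
end
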